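/- Let $(a_n)$ be a proper sequence in a semigroup. Then the set $A = FS(a_n)$ can be partitioned (up to adding leftovers to one part) into infinitely many pairwise disjoint proper IP sets; i.e., there exist injective sequences $(b^{(k)}_n)_n$ for $k \in \mathbb{N}$ such that the sets $FS(b^{(k)}_n)$ are pairwise disjoint subsets of $A$. -/

import Mathlib

/-- The ordered sum `a_{i_1} + ⋯ + a_{i_m}` over a finite index set
`F = {i_1 < ⋯ < i_m}` (junk value `a 0` if `F = ∅`). -/
def ordsum {S : Type*} [AddSemigroup S] (a : ℕ → S) (F : Finset ℕ) : S :=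
  match F.sort (· ≤ ·) with
  | [] => a 0
  | i :: l => l.foldl (fun s j => s + a j) (a i)

/-- `F < G`: every element of `F` is smaller than every element of `G`. -/
def FinsetLT (F G : Finset ℕ) : Prop := ∀ i ∈ F, ∀ j ∈ G, i < j

/-- `FS(a_1, a_2, …)`: the set of all finite ordered sums of the sequence `a`. -/
def FSset {S : Type*} [AddSemigroup S] (a : ℕ → S) : Set S :=
  {s | ∃ F : Finset ℕ, F.Nonempty ∧ ordsum a F = s}

/-- `FS(a_n, a_{n+1}, …)`: finite ordered sums with all indices `≥ n`. -/
def FStail {S : Type*} [AddSemigroup S] (a : ℕ → S) (n : ℕ) : Set S :=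
  {s | ∃ F : Finset ℕ, F.Nonempty ∧ (∀ i ∈ F, n ≤ i) ∧ ordsum a F = s}

/-- A sequence is proper if `a_{F₁} ≠ a_{F₂}` whenever `F₁ < F₂`. -/
def IsProperSeq {S : Type*} [AddSemigroup S] (a : ℕ → S) : Prop :=
  ∀ F G : Finset ℕ, F.Nonempty → G.Nonempty → FinsetLT F G →
    ordsum a F ≠ ordsum a G

/-- `b` is a sumsequence of `a`: `b_k = a_{F_k}` for finite index sets `F₁ < F₂ < ⋯`. -/
def IsSumseq {S : Type*} [AddSemigroup S] (a b : ℕ → S) : Prop :=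
  ∃ F : ℕ → Finset ℕ, (∀ k, (F k).Nonempty) ∧
    (∀ k, FinsetLT (F k) (F (k + 1))) ∧ (∀ k, b k = ordsum a (F k))

/-!
Take an idempotent ultrafilter `U` containing every tail `FS(a_n, a_{n+1}, …)`; properness of `a`
makes `U` nonprincipal. Choose finite blocks `B₀ < B₁ < ⋯` one at a time, give block `t` the
colour `(Nat.unpair t).1`, and let `b^{(k)}` list the sums `a_{B_t}` over the blocks of colour `k`.
The invariant is that, across different colours, the sums of blocks chosen so far, together with
the limits `lim_{s → U} (y + s)` of such sums `y`, form disjoint sets. A new block sum `s` of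
colour `k` must keep `s`, each `x + s` with `x` an old sum of colour `k`, and their `U`-limits away
from the finitely many points of the other colours. Idempotence and nonprincipality of `U` make
each of these conditions hold for `U`-almost every `s`, so a suitable block exists in every tail.
-/

open Finset Function

theorem exists_seq_of_forall_exists_next {α : Type*} [Nonempty α] (P : (ℕ → α) → ℕ → α → Prop)
    (hP : ∀ f g t x, (∀ i < t, f i = g i) → P f t x → P g t x)
    (h : ∀ f t, (∀ i < t, P f i (f i)) → ∃ x, P f t x) :
    ∃ f : ℕ → α, ∀ t, P f t (f t) := by
  classical
  let extend (t : ℕ) (g : ∀ i, i < t → α) : ℕ → α := fun i =>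
    if hi : i < t then g i hi else Classical.arbitrary α
  let f : ℕ → α := Nat.strongRec fun t g =>
    if hx : ∃ x, P (extend t g) t x then hx.choose else Classical.arbitrary α
  have hextend : ∀ t, ∀ i < t, extend t (fun m _ => f m) i = f i := fun t i hi => dif_pos hi
  refine ⟨f, fun t => ?_⟩
  induction t using Nat.strong_induction_on with
  | _ t ih =>
    have hx : ∃ x, P (extend t fun m _ => f m) t x := h _ t fun i hi => by
      rw [hextend t i hi]
      exact hP f _ i _ (fun j hj => (hextend t j (hj.trans hi)).symm) (ih i hi)
    have hft : f t = hx.choose := by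
      rw [show f t = _ from Nat.strongRec_eq _ t]
      exact dif_pos hx
    rw [hft]
    exact hP _ f t _ (hextend t) hx.choose_spec

section Ordsum

variable {S : Type*} [AddSemigroup S] (a : ℕ → S)

lemma ordsum_singleton (i : ℕ) : ordsum a {i} = a i := by
  simp [ordsum, Finset.sort_singleton]

lemma ordsum_insert_of_lt {F : Finset ℕ} {i : ℕ} (hlt : ∀ j ∈ F, i < j) (hF : F.Nonempty) :
    ordsum a (insert i F) = a i + ordsum a F := by
  have foldl_add : ∀ (l : List ℕ) (x y : S),
      l.foldl (fun s j => s + a j) (x + y) = x + l.foldl (fun s j => s + a j) y := by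
    intro l
    induction l with
    | nil => intro x y; rfl
    | cons j l ih => intro x y; simp only [List.foldl, add_assoc, ih]
  obtain ⟨f, l, hfl⟩ : ∃ f l, F.sort (· ≤ ·) = f :: l :=
    List.exists_cons_of_ne_nil fun h =>
      hF.card_pos.ne' (by rw [← Finset.length_sort (· ≤ ·), h, List.length_nil])
  have hsort : (insert i F).sort (· ≤ ·) = i :: F.sort (· ≤ ·) :=
    Finset.sort_insert _ (fun j hj => (hlt j hj).le) (fun hi => lt_irrefl i (hlt i hi))
  simp only [ordsum, hsort, hfl, List.foldl, foldl_add]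

lemma ordsum_union {F G : Finset ℕ} (hFG : FinsetLT F G) (hF : F.Nonempty) (hG : G.Nonempty) :
    ordsum a (F ∪ G) = ordsum a F + ordsum a G := by
  induction F using Finset.induction_on_min with
  | empty => exact absurd hF Finset.not_nonempty_empty
  | insert i F hmin ih =>
    have hiG : ∀ j ∈ G, i < j := hFG i (mem_insert_self i F)
    rcases F.eq_empty_or_nonempty with rfl | hF'
    · rw [insert_empty, singleton_union, ordsum_insert_of_lt a hiG hG, ordsum_singleton]
    · have hFG' : FinsetLT F G := fun x hx => hFG x (mem_insert_of_mem hx)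
      have hiFG : ∀ j ∈ F ∪ G, i < j := fun j hj =>
        (mem_union.1 hj).elim (hmin j) (hiG j)
      rw [insert_union, ordsum_insert_of_lt a hiFG (hF'.mono subset_union_left), ih hFG' hF',
        ordsum_insert_of_lt a hmin hF', add_assoc]

lemma FinsetLT.trans {F G H : Finset ℕ} (hFG : FinsetLT F G) (hG : G.Nonempty)
    (hGH : FinsetLT G H) : FinsetLT F H := fun _ hi k hk =>
  (hFG _ hi _ hG.choose_spec).trans (hGH _ hG.choose_spec k hk)

lemma finsetLT_of_sup_lt {F G : Finset ℕ} (h : ∀ j ∈ G, F.sup id < j) : FinsetLT F G :=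
  fun _ hi j hj => lt_of_le_of_lt (le_sup (f := id) hi) (h j hj)

lemma finsetLT_biUnion_left {I G : Finset ℕ} {B : ℕ → Finset ℕ}
    (h : ∀ i ∈ I, FinsetLT (B i) G) : FinsetLT (I.biUnion B) G := fun x hx => by
  obtain ⟨i, hi, hxi⟩ := mem_biUnion.1 hx
  exact h i hi x hxi

lemma finsetLT_biUnion_right {I F : Finset ℕ} {B : ℕ → Finset ℕ}
    (h : ∀ i ∈ I, FinsetLT F (B i)) : FinsetLT F (I.biUnion B) := fun x hx j hj => by
  obtain ⟨i, hi, hji⟩ := mem_biUnion.1 hj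
  exact h i hi x hx j hji

lemma ordsum_biUnion {B : ℕ → Finset ℕ} (hne : ∀ n, (B n).Nonempty)
    (hlt : ∀ i j, i < j → FinsetLT (B i) (B j)) {I : Finset ℕ} (hI : I.Nonempty) :
    ordsum (fun n => ordsum a (B n)) I = ordsum a (I.biUnion B) := by
  induction I using Finset.induction_on_min with
  | empty => exact absurd hI Finset.not_nonempty_empty
  | insert i I hmin ih =>
    rcases I.eq_empty_or_nonempty with rfl | hI'
    · rw [insert_empty, singleton_biUnion, ordsum_singleton]
    · rw [biUnion_insert, ordsum_insert_of_lt _ hmin hI', ih hI',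
        ordsum_union a (finsetLT_biUnion_right fun j hj => hlt i j (hmin j hj)) (hne i)
          (hI'.biUnion fun j _ => hne j)]

end Ordsum

section Sumseq

variable {S : Type*} [AddSemigroup S] {a b : ℕ → S}

lemma finsetLT_of_lt {F : ℕ → Finset ℕ} (hne : ∀ k, (F k).Nonempty)
    (h : ∀ k, FinsetLT (F k) (F (k + 1))) {i j : ℕ} (hij : i < j) : FinsetLT (F i) (F j) := by
  induction hij with
  | refl => exact h _
  | step _ ih => exact ih.trans (hne _) (h _)

lemma isSumseq_ordsum_comp {B : ℕ → Finset ℕ} (hne : ∀ t, (B t).Nonempty)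
    (hlt : ∀ i j, i < j → FinsetLT (B i) (B j)) {φ : ℕ → ℕ} (hφ : StrictMono φ) :
    IsSumseq a fun n => ordsum a (B (φ n)) :=
  ⟨fun n => B (φ n), fun _ => hne _, fun n => hlt _ _ (hφ n.lt_succ_self), fun _ => rfl⟩

lemma IsSumseq.exists_blocks (hb : IsSumseq a b) : ∃ F : ℕ → Finset ℕ, (∀ k, (F k).Nonempty) ∧
    (∀ i j, i < j → FinsetLT (F i) (F j)) ∧ b = fun k => ordsum a (F k) := by
  obtain ⟨F, hne, hlt, hb⟩ := hb
  exact ⟨F, hne, fun _ _ => finsetLT_of_lt hne hlt, funext hb⟩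

lemma IsSumseq.FSset_subset (hb : IsSumseq a b) : FSset b ⊆ FSset a := by
  obtain ⟨F, hne, hlt, rfl⟩ := hb.exists_blocks
  rintro _ ⟨I, hI, rfl⟩
  exact ⟨I.biUnion F, hI.biUnion fun k _ => hne k, (ordsum_biUnion a hne hlt hI).symm⟩

lemma IsProperSeq.of_isSumseq (ha : IsProperSeq a) (hb : IsSumseq a b) : IsProperSeq b := by
  obtain ⟨F, hne, hlt, rfl⟩ := hb.exists_blocks
  intro I J hI hJ hIJ
  rw [ordsum_biUnion a hne hlt hI, ordsum_biUnion a hne hlt hJ]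
  exact ha _ _ (hI.biUnion fun k _ => hne k) (hJ.biUnion fun k _ => hne k)
    (finsetLT_biUnion_left fun i hi => finsetLT_biUnion_right fun j hj => hlt i j (hIJ i hi j hj))

lemma IsProperSeq.injective (ha : IsProperSeq a) : Injective a :=
  .of_lt_imp_ne fun i j hij => by
    simpa only [ordsum_singleton] using ha {i} {j} (singleton_nonempty i) (singleton_nonempty j)
      (by simpa [FinsetLT] using hij)

end Sumseq

attribute [local instance] Ultrafilter.add Ultrafilter.addSemigroup

section Ultrafilter

variable {S : Type*} [AddSemigroup S] {a : ℕ → S}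

lemma FStail_antitone : Antitone (FStail a) := by
  rintro n m hnm _ ⟨F, hF, hge, rfl⟩
  exact ⟨F, hF, fun i hi => hnm.trans (hge i hi), rfl⟩

lemma mem_FStail_self (n : ℕ) : a n ∈ FStail a n :=
  ⟨{n}, singleton_nonempty n, by simp, ordsum_singleton a n⟩

lemma exists_add_mem_FStail {n : ℕ} {s : S} (hs : s ∈ FStail a n) :
    ∃ m, ∀ s' ∈ FStail a m, s + s' ∈ FStail a n := by
  obtain ⟨F, hF, hge, rfl⟩ := hs
  refine ⟨F.sup id + 1, ?_⟩
  rintro _ ⟨G, hG, hge', rfl⟩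
  have hFG : FinsetLT F G := finsetLT_of_sup_lt fun j hj => hge' j hj
  refine ⟨F ∪ G, hF.mono subset_union_left, fun i hi => ?_, ordsum_union a hFG hF hG⟩
  rcases mem_union.1 hi with hi | hi
  · exact hge i hi
  · exact (hge _ hF.choose_spec).trans (hFG _ hF.choose_spec i hi).le

lemma exists_idempotent_ultrafilter_FStail (a : ℕ → S) :
    ∃ U : Ultrafilter S, U + U = U ∧ ∀ n, FStail a n ∈ U := by
  have h := exists_idempotent_in_compact_add_subsemigroup
    Ultrafilter.continuous_add_left (⋂ n, {U : Ultrafilter S | FStail a n ∈ U}) ?_ ?_ ?_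
  · obtain ⟨U, hU, hidem⟩ := h
    exact ⟨U, hidem, Set.mem_iInter.1 hU⟩
  · apply IsCompact.nonempty_iInter_of_sequence_nonempty_isCompact_isClosed
    · exact fun n U hU => Filter.mem_of_superset hU (FStail_antitone n.le_succ)
    · exact fun n => ⟨pure (a n), Filter.mem_pure.2 (mem_FStail_self n)⟩
    · exact (ultrafilter_isClosed_basic _).isCompact
    · exact fun n => ultrafilter_isClosed_basic _
  · exact (isClosed_iInter fun n => ultrafilter_isClosed_basic _).isCompact
  · simp only [Set.mem_iInter, Set.mem_ofPred_eq]
    intro U hU V hV n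
    change ∀ᶠ s in (U + V : Ultrafilter S), s ∈ FStail a n
    rw [Ultrafilter.eventually_add]
    filter_upwards [hU n] with s hs
    obtain ⟨m, hm⟩ := exists_add_mem_FStail hs
    filter_upwards [hV m] with s' hs' using hm s' hs'

lemma IsProperSeq.eventually_ne (ha : IsProperSeq a) {U : Ultrafilter S}
    (htail : ∀ n, FStail a n ∈ U) (z : S) : ∀ᶠ s in (U : Filter S), s ≠ z := by
  refine Ultrafilter.eventually_not.2 fun hz => ?_
  obtain ⟨F, hF, -, hFz⟩ := (hz.and (htail 0)).exists.elim fun _ h => h.1 ▸ h.2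
  obtain ⟨G, hG, hge, hGz⟩ := (hz.and (htail (F.sup id + 1))).exists.elim fun _ h => h.1 ▸ h.2
  exact ha F G hF hG (finsetLT_of_sup_lt fun j hj => hge j hj) (hFz.trans hGz.symm)

variable (U : Ultrafilter S)

def IsAddLimit (x z : S) : Prop := ∀ᶠ s in (U : Filter S), x + s = z

def EqOrAddLimit (y z : S) : Prop := y = z ∨ IsAddLimit U y z

variable {U}

lemma finite_setOf_eqOrAddLimit (y : S) : {z | EqOrAddLimit U y z}.Finite := by
  have hlim : {z | IsAddLimit U y z}.Subsingleton := fun z hz z' hz' =>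
    (Filter.Eventually.and hz hz').exists.elim fun _ h => h.1.symm.trans h.2
  exact ((Set.finite_singleton y).union hlim.finite).subset fun z hz => hz.imp Eq.symm id

lemma eventually_not_eqOrAddLimit (hidem : U + U = U) {z : S}
    (hz : ∀ᶠ s in (U : Filter S), s ≠ z) : ∀ᶠ s in (U : Filter S), ¬ EqOrAddLimit U s z := by
  have hlim : ∀ᶠ s in (U : Filter S), ¬ IsAddLimit U s z := by
    refine Ultrafilter.eventually_not.2 fun h => ?_
    have hz' : ∀ᶠ c in (U + U : Ultrafilter S), c = z := (Ultrafilter.eventually_add U U _).2 h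
    rw [hidem] at hz'
    exact (hz.and hz').exists.elim fun _ h => h.1 h.2
  filter_upwards [hz, hlim] with s h₁ h₂ using not_or.2 ⟨h₁, h₂⟩

lemma eventually_not_eqOrAddLimit_add (hidem : U + U = U) {x z : S}
    (hxz : ¬ IsAddLimit U x z) : ∀ᶠ s in (U : Filter S), ¬ EqOrAddLimit U (x + s) z := by
  have hlim : ∀ᶠ s in (U : Filter S), ¬ IsAddLimit U (x + s) z := by
    refine Ultrafilter.eventually_not.2 fun h => hxz ?_
    have hxz' : ∀ᶠ c in (U + U : Ultrafilter S), x + c = z :=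
      (Ultrafilter.eventually_add U U _).2 (by simpa only [IsAddLimit, add_assoc] using h)
    rwa [hidem] at hxz'
  filter_upwards [Ultrafilter.eventually_not.2 hxz, hlim] with s h₁ h₂ using not_or.2 ⟨h₁, h₂⟩

end Ultrafilter

def blockColor (t : ℕ) : ℕ := (Nat.unpair t).1

section Construction

variable {S : Type*} [AddSemigroup S] (a : ℕ → S) (U : Ultrafilter S)

def colorSums (B : ℕ → Finset ℕ) (k t : ℕ) : Set S :=
  {v | ∃ I : Finset ℕ, I.Nonempty ∧ (∀ i ∈ I, i < t ∧ blockColor i = k) ∧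
    ordsum a (I.biUnion B) = v}

def colorReach (B : ℕ → Finset ℕ) (k t : ℕ) : Set S :=
  {z | ∃ y ∈ colorSums a B k t, EqOrAddLimit U y z}

def IsGoodBlock (B : ℕ → Finset ℕ) (t : ℕ) (F : Finset ℕ) : Prop :=
  F.Nonempty ∧ (∀ i < t, FinsetLT (B i) F) ∧
    ∀ l ≠ blockColor t, ∀ z ∈ colorReach a U B l t, ¬ EqOrAddLimit U (ordsum a F) z ∧
      ∀ x ∈ colorSums a B (blockColor t) t, ¬ EqOrAddLimit U (x + ordsum a F) z

variable {a U} {B : ℕ → Finset ℕ}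

lemma colorSums_mono {k t t' : ℕ} (h : t ≤ t') : colorSums a B k t ⊆ colorSums a B k t' := by
  rintro _ ⟨I, hI, hIt, rfl⟩
  exact ⟨I, hI, fun i hi => ⟨(hIt i hi).1.trans_le h, (hIt i hi).2⟩, rfl⟩

lemma colorSums_subset_colorReach (k t : ℕ) : colorSums a B k t ⊆ colorReach a U B k t :=
  fun y hy => ⟨y, hy, Or.inl rfl⟩

lemma colorSums_congr {B' : ℕ → Finset ℕ} {t : ℕ} (h : ∀ i < t, B i = B' i) (k : ℕ) :
    colorSums a B k t = colorSums a B' k t :=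
  Set.ext fun _ => exists_congr fun _ => and_congr_right fun _ => and_congr_right fun hIt => by
    rw [biUnion_congr rfl fun i hi => h i (hIt i hi).1]

lemma colorReach_congr {B' : ℕ → Finset ℕ} {t : ℕ} (h : ∀ i < t, B i = B' i) (k : ℕ) :
    colorReach a U B k t = colorReach a U B' k t := by
  simp only [colorReach, colorSums_congr h]

lemma IsGoodBlock.congr {B' : ℕ → Finset ℕ} {t : ℕ} {F : Finset ℕ} (h : ∀ i < t, B i = B' i)
    (hF : IsGoodBlock a U B t F) : IsGoodBlock a U B' t F := by
  obtain ⟨hF, hlt, hgood⟩ := hF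
  refine ⟨hF, fun i hi => h i hi ▸ hlt i hi, ?_⟩
  simpa only [colorReach_congr h, colorSums_congr h] using hgood

lemma colorSums_succ_of_ne {k t : ℕ} (hk : k ≠ blockColor t) :
    colorSums a B k (t + 1) = colorSums a B k t := by
  refine Set.Subset.antisymm ?_ (colorSums_mono t.le_succ)
  rintro _ ⟨I, hI, hIt, rfl⟩
  refine ⟨I, hI, fun i hi => ⟨?_, (hIt i hi).2⟩, rfl⟩
  exact (Nat.lt_succ_iff_lt_or_eq.1 (hIt i hi).1).resolve_right
    fun hit => hk (hit ▸ (hIt i hi).2).symm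

lemma colorReach_succ_of_ne {k t : ℕ} (hk : k ≠ blockColor t) :
    colorReach a U B k (t + 1) = colorReach a U B k t := by
  simp only [colorReach, colorSums_succ_of_ne hk]

lemma mem_colorSums_succ {k t : ℕ} {v : S} (hne : ∀ i ≤ t, (B i).Nonempty)
    (hlt : ∀ i < t, FinsetLT (B i) (B t)) (hv : v ∈ colorSums a B k (t + 1)) :
    v ∈ colorSums a B k t ∨ v = ordsum a (B t) ∨
      ∃ x ∈ colorSums a B k t, v = x + ordsum a (B t) := by
  obtain ⟨I, hI, hIt, rfl⟩ := hv
  by_cases ht : t ∈ I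
  · set J := I.erase t
    have hJt : ∀ i ∈ J, i < t ∧ blockColor i = k := fun i hi =>
      ⟨(Nat.lt_succ_iff_lt_or_eq.1 (hIt i (mem_of_mem_erase hi)).1).resolve_right
        (ne_of_mem_erase hi), (hIt i (mem_of_mem_erase hi)).2⟩
    have hIJ : I = insert t J := (insert_erase ht).symm
    rcases J.eq_empty_or_nonempty with hJ | hJ
    · right; left
      rw [hIJ, hJ, insert_empty, singleton_biUnion]
    · right; right
      refine ⟨_, ⟨J, hJ, hJt, rfl⟩, ?_⟩
      rw [hIJ, biUnion_insert, union_comm,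
        ordsum_union a (finsetLT_biUnion_left fun i hi => hlt i (hJt i hi).1)
          (hJ.biUnion fun i hi => hne i (hJt i hi).1.le) (hne t le_rfl)]
  · left
    exact ⟨I, hI, fun i hi => ⟨(Nat.lt_succ_iff_lt_or_eq.1 (hIt i hi).1).resolve_right
      fun h => ht (h ▸ hi), (hIt i hi).2⟩, rfl⟩

lemma mem_colorReach_succ {k t : ℕ} {z : S} (hne : ∀ i ≤ t, (B i).Nonempty)
    (hlt : ∀ i < t, FinsetLT (B i) (B t)) (hz : z ∈ colorReach a U B k (t + 1)) :
    z ∈ colorReach a U B k t ∨ EqOrAddLimit U (ordsum a (B t)) z ∨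
      ∃ x ∈ colorSums a B k t, EqOrAddLimit U (x + ordsum a (B t)) z := by
  obtain ⟨y, hy, hyz⟩ := hz
  rcases mem_colorSums_succ hne hlt hy with hy | rfl | ⟨x, hx, rfl⟩
  · exact Or.inl ⟨y, hy, hyz⟩
  · exact Or.inr (Or.inl hyz)
  · exact Or.inr (Or.inr ⟨x, hx, hyz⟩)

lemma finite_iUnion_colorReach (B : ℕ → Finset ℕ) (t : ℕ) :
    (⋃ k, colorReach a U B k t).Finite := by
  have hsums : ((fun I : Finset ℕ => ordsum a (I.biUnion B)) '' ↑(range t).powerset).Finite :=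
    (Set.toFinite _).image _
  refine (hsums.biUnion fun y _ => finite_setOf_eqOrAddLimit (U := U) y).subset ?_
  rintro z ⟨_, ⟨k, rfl⟩, y, ⟨I, -, hIt, rfl⟩, hyz⟩
  exact Set.mem_biUnion ⟨I, mem_powerset.2 fun i hi => mem_range.2 (hIt i hi).1, rfl⟩ hyz

lemma exists_isGoodBlock (ha : IsProperSeq a) (hidem : U + U = U) (htail : ∀ n, FStail a n ∈ U)
    {t : ℕ} (hsep : Pairwise (Disjoint on fun k => colorReach a U B k t)) :
    ∃ F, IsGoodBlock a U B t F := by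
  set k := blockColor t
  set Z := {z | ∃ l ≠ k, z ∈ colorReach a U B l t}
  have hZ : Z.Finite := (finite_iUnion_colorReach B t).subset fun z ⟨l, _, hz⟩ =>
    Set.mem_iUnion.2 ⟨l, hz⟩
  have hsums : (colorSums a B k t).Finite := (finite_iUnion_colorReach (U := U) B t).subset
    fun x hx => Set.mem_iUnion.2 ⟨k, colorSums_subset_colorReach k t hx⟩
  have hgood : ∀ᶠ s in (U : Filter S), ∀ z ∈ Z, ¬ EqOrAddLimit U s z ∧
      ∀ x ∈ colorSums a B k t, ¬ EqOrAddLimit U (x + s) z := by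
    refine hZ.eventually_all.2 fun z ⟨l, hl, hz⟩ =>
      (eventually_not_eqOrAddLimit hidem (ha.eventually_ne htail z)).and
        (hsums.eventually_all.2 fun x hx => eventually_not_eqOrAddLimit_add hidem fun hxz => ?_)
    exact Set.disjoint_left.1 (hsep hl.symm) ⟨x, hx, Or.inr hxz⟩ hz
  obtain ⟨_, ⟨F, hF, hge, rfl⟩, hFgood⟩ :=
    (Filter.Eventually.and (htail (((range t).biUnion B).sup id + 1)) hgood).exists
  refine ⟨F, hF, fun i hi => finsetLT_of_sup_lt fun j hj => ?_,
    fun l hl z hz => hFgood z ⟨l, hl, hz⟩⟩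
  exact lt_of_le_of_lt (sup_mono (subset_biUnion_of_mem B (mem_range.2 hi))) (hge j hj)

lemma pairwise_disjoint_colorReach_succ {t : ℕ}
    (hsep : Pairwise (Disjoint on fun k => colorReach a U B k t))
    (hne : ∀ i ≤ t, (B i).Nonempty) (hgood : IsGoodBlock a U B t (B t)) :
    Pairwise (Disjoint on fun k => colorReach a U B k (t + 1)) := by
  have hnew : ∀ l ≠ blockColor t,
      Disjoint (colorReach a U B (blockColor t) (t + 1)) (colorReach a U B l (t + 1)) := by
    intro l hl
    rw [colorReach_succ_of_ne hl, Set.disjoint_left]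
    intro z hz hzl
    rcases mem_colorReach_succ hne hgood.2.1 hz with hz | hz | ⟨x, hx, hz⟩
    · exact Set.disjoint_left.1 (hsep hl.symm) hz hzl
    · exact (hgood.2.2 l hl z hzl).1 hz
    · exact (hgood.2.2 l hl z hzl).2 x hx hz
  intro k l hkl
  by_cases hk : k = blockColor t
  · subst hk
    exact hnew l hkl.symm
  by_cases hl : l = blockColor t
  · subst hl
    exact (hnew k hkl).symm
  simpa only [onFun, colorReach_succ_of_ne hk, colorReach_succ_of_ne hl] using hsep hkl

lemma pairwise_disjoint_colorReach {t : ℕ} (hgood : ∀ i < t, IsGoodBlock a U B i (B i)) :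
    Pairwise (Disjoint on fun k => colorReach a U B k t) := by
  induction t with
  | zero =>
    exact fun _ _ _ => Set.disjoint_left.2 fun _ ⟨_, ⟨_, hI, hIt, _⟩, _⟩ _ =>
      Nat.not_lt_zero _ (hIt _ hI.choose_spec).1
  | succ t ih =>
    exact pairwise_disjoint_colorReach_succ (ih fun i hi => hgood i (hi.trans t.lt_succ_self))
      (fun i hi => (hgood i (Nat.lt_succ_of_le hi)).1) (hgood t t.lt_succ_self)

lemma exists_good_blocks (ha : IsProperSeq a) (hidem : U + U = U)
    (htail : ∀ n, FStail a n ∈ U) : ∃ B : ℕ → Finset ℕ, ∀ t, IsGoodBlock a U B t (B t) :=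
  exists_seq_of_forall_exists_next (IsGoodBlock a U) (fun _ _ _ _ h => IsGoodBlock.congr h)
    fun _ _ hgood => exists_isGoodBlock ha hidem htail (pairwise_disjoint_colorReach hgood)

lemma FSset_subset_iUnion_colorSums (hne : ∀ t, (B t).Nonempty)
    (hlt : ∀ i j, i < j → FinsetLT (B i) (B j)) (k : ℕ) :
    FSset (fun n => ordsum a (B (Nat.pair k n))) ⊆ ⋃ t, colorSums a B k t := by
  rintro _ ⟨I, hI, rfl⟩
  refine Set.mem_iUnion.2 ⟨(I.image (Nat.pair k)).sup id + 1, I.image (Nat.pair k), hI.image _,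
    fun i hi => ?_, ?_⟩
  · obtain ⟨n, -, rfl⟩ := mem_image.1 hi
    exact ⟨Nat.lt_succ_of_le (le_sup (f := id) hi), by simp [blockColor]⟩
  · rw [image_biUnion]
    exact (ordsum_biUnion a (fun n => hne _)
      (fun i j h => hlt _ _ (Nat.pair_lt_pair_right k h)) hI).symm

end Construction

theorem stmt10 {S : Type*} [AddSemigroup S] (a : ℕ → S) (ha : IsProperSeq a) :
    ∃ b : ℕ → ℕ → S, (∀ k, Function.Injective (b k)) ∧
      (∀ k, FSset (b k) ⊆ FSset a) ∧
      (∀ k l, k ≠ l → Disjoint (FSset (b k)) (FSset (b l))) := by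
  obtain ⟨U, hidem, htail⟩ := exists_idempotent_ultrafilter_FStail a
  obtain ⟨B, hB⟩ := exists_good_blocks ha hidem htail
  have hne : ∀ t, (B t).Nonempty := fun t => (hB t).1
  have hlt : ∀ i j, i < j → FinsetLT (B i) (B j) := fun i j hij => (hB j).2.1 i hij
  have hsum : ∀ k, IsSumseq a fun n => ordsum a (B (Nat.pair k n)) := fun k =>
    isSumseq_ordsum_comp hne hlt fun _ _ => Nat.pair_lt_pair_right k
  refine ⟨fun k n => ordsum a (B (Nat.pair k n)), fun k => (ha.of_isSumseq (hsum k)).injective,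
    fun k => (hsum k).FSset_subset, fun k l hkl => Set.disjoint_left.2 fun z hzk hzl => ?_⟩
  obtain ⟨t, hzk⟩ := Set.mem_iUnion.1 (FSset_subset_iUnion_colorSums hne hlt k hzk)
  obtain ⟨t', hzl⟩ := Set.mem_iUnion.1 (FSset_subset_iUnion_colorSums hne hlt l hzl)
  exact Set.disjoint_left.1 (pairwise_disjoint_colorReach (U := U) (t := max t t') (fun i _ => hB i) hkl)
    (colorSums_subset_colorReach k _ (colorSums_mono (le_max_left t t') hzk))
    (colorSums_subset_colorReach l _ (colorSums_mono (le_max_right t t') hzl))
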